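/- A linear map D : V → V is an antiderivation of the Leibniz algebra L₁₈ if and only if D(e₁) and D(e₂) are arbitrary vectors of V, and, writing a for the coefficient of e₁ in D(e₁), c for the coefficient of e₂ in D(e₁), and b for the coefficient of e₂ in D(e₂), one has D(e₃) = (a+b)·e₃ − c·e₄ and D(e₄) = 0. Consequently, the space of antiderivations of L₁₈ is an 8-dimensional linear subspace of End(V). -/

import Mathlib

/-- `V = ℂ⁴`. -/
abbrev V : Type := Fin 4 → ℂ

/-- standard basis: `e 0 = e₁`, ..., `e 3 = e₄`. -/
def e (i : Fin 4) : V := Pi.single i 1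

/-- Bracket of the Leibniz algebra `L₁₈`:
`⟦e₁,e₂⟧ = e₃`, `⟦e₂,e₁⟧ = -e₃`, `⟦e₂,e₂⟧ = e₄`, all other basis products zero. -/
def br (x y : V) : V :=
  (x 0 * y 1 - x 1 * y 0) • e 2 + (x 1 * y 1) • e 3

/-- An antiderivation. -/
def IsAntiDer (D : V →ₗ[ℂ] V) : Prop :=
  ∀ x y : V, D (br x y) = br x (D y) - br y (D x)

/-!
Evaluating the antiderivation identity at `(e₁, e₂)` and `(e₂, e₂)` forces the values of `D` on
`e₃` and `e₄`. Conversely these two values suffice, because both sides of the identity are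
bilinear in `(x, y)` and the bracket only sees the `e₁`, `e₂` coordinates. Hence `D ↦ (D e₁, D e₂)`
identifies the antiderivations with `V × V`.
-/

lemma eq_sum_smul_e (v : V) : v = v 0 • e 0 + v 1 • e 1 + v 2 • e 2 + v 3 • e 3 := by
  funext i
  fin_cases i <;> simp [e]

lemma apply_eq_sum_smul_apply_e (D : V →ₗ[ℂ] V) (v : V) :
    D v = v 0 • D (e 0) + v 1 • D (e 1) + v 2 • D (e 2) + v 3 • D (e 3) := by
  conv_lhs => rw [eq_sum_smul_e v]
  simp only [map_add, map_smul]

lemma br_e0_left (v : V) : br (e 0) v = v 1 • e 2 := by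
  simp [br, e]

lemma br_e1_left (v : V) : br (e 1) v = v 1 • e 3 - v 0 • e 2 := by
  simp [br, e]
  abel

lemma br_e0_e1 : br (e 0) (e 1) = e 2 := by
  rw [br_e0_left]; simp [e]

lemma br_e1_e1 : br (e 1) (e 1) = e 3 := by
  rw [br_e1_left]; simp [e]

theorem isAntiDer_iff (D : V →ₗ[ℂ] V) : IsAntiDer D ↔
    D (e 2) = (D (e 0) 0 + D (e 1) 1) • e 2 - (D (e 0) 1) • e 3 ∧ D (e 3) = 0 := by
  constructor
  · intro hD
    have h2 := hD (e 0) (e 1)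
    have h3 := hD (e 1) (e 1)
    rw [br_e0_e1, br_e0_left, br_e1_left] at h2
    rw [br_e1_e1, sub_self] at h3
    exact ⟨by rw [h2]; module, h3⟩
  · rintro ⟨h2, h3⟩ x y
    rw [apply_eq_sum_smul_apply_e D (br x y), apply_eq_sum_smul_apply_e D x,
      apply_eq_sum_smul_apply_e D y, h2, h3]
    funext i
    fin_cases i <;> simp [br, e] <;> ring

/-- The value on `e₃` is the one forced by `isAntiDer_iff`, the value on `e₄` is `0`. -/
noncomputable def antiDerOfValues : V × V →ₗ[ℂ] V →ₗ[ℂ] V :=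
  LinearMap.mk₂ ℂ
    (fun p v ↦ v 0 • p.1 + v 1 • p.2 + v 2 • ((p.1 0 + p.2 1) • e 2 - p.1 1 • e 3))
    (fun _ _ _ ↦ by funext i; simp; ring)
    (fun _ _ _ ↦ by funext i; simp; ring)
    (fun _ _ _ ↦ by funext i; simp; ring)
    (fun _ _ _ ↦ by funext i; simp; ring)

section antiDerOfValues

variable (p : V × V)

@[simp] lemma antiDerOfValues_e0 : antiDerOfValues p (e 0) = p.1 := by
  simp [antiDerOfValues, e]

@[simp] lemma antiDerOfValues_e1 : antiDerOfValues p (e 1) = p.2 := by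
  simp [antiDerOfValues, e]

lemma isAntiDer_antiDerOfValues : IsAntiDer (antiDerOfValues p) := by
  rw [isAntiDer_iff]
  simp [antiDerOfValues, e]

end antiDerOfValues

lemma IsAntiDer.ext {D D' : V →ₗ[ℂ] V} (hD : IsAntiDer D) (hD' : IsAntiDer D')
    (h0 : D (e 0) = D' (e 0)) (h1 : D (e 1) = D' (e 1)) : D = D' := by
  obtain ⟨h2, h3⟩ := (isAntiDer_iff D).1 hD
  obtain ⟨h2', h3'⟩ := (isAntiDer_iff D').1 hD'
  refine (Pi.basisFun ℂ (Fin 4)).ext fun i ↦ ?_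
  rw [Pi.basisFun_apply]
  change D (e i) = D' (e i)
  match i with
  | 0 => exact h0
  | 1 => exact h1
  | 2 => rw [h2, h2', h0, h1]
  | 3 => rw [h3, h3']

lemma antiDerOfValues_injective : Function.Injective antiDerOfValues := fun p q h ↦ by
  simpa using congr(($h (e 0), $h (e 1)))

lemma range_antiDerOfValues :
    (LinearMap.range antiDerOfValues : Set (V →ₗ[ℂ] V)) = {D | IsAntiDer D} := by
  ext D
  exact ⟨by rintro ⟨p, rfl⟩; exact isAntiDer_antiDerOfValues p,
    fun hD ↦ ⟨(D (e 0), D (e 1)),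
      (isAntiDer_antiDerOfValues _).ext hD (antiDerOfValues_e0 _) (antiDerOfValues_e1 _)⟩⟩

/-- `D e₁`, `D e₂` are arbitrary; with `a` the coefficient of `e₁` in `D e₁`,
`c` the coefficient of `e₂` in `D e₁`, and `b` the coefficient of `e₂` in `D e₂`,
one has `D e₃ = (a+b)•e₃ - c•e₄` and `D e₄ = 0`. -/
theorem antiderivations_of_L18 :
    (∀ D : V →ₗ[ℂ] V, IsAntiDer D ↔
      D (e 2) = (D (e 0) 0 + D (e 1) 1) • e 2 - (D (e 0) 1) • e 3 ∧
      D (e 3) = 0) ∧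
    ∃ S : Submodule ℂ (V →ₗ[ℂ] V),
      (S : Set (V →ₗ[ℂ] V)) = {D | IsAntiDer D} ∧ Module.finrank ℂ S = 8 := by
  refine ⟨isAntiDer_iff, LinearMap.range antiDerOfValues, range_antiDerOfValues, ?_⟩
  rw [LinearMap.finrank_range_of_inj antiDerOfValues_injective]
  simp
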